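/- arXiv:2602.19867 — 8 statements merged into one kernel-verified Lean document; each statement's English description precedes it below -/
import Mathlib

section
/- For every e ∈ ℝ^n and every v ∈ ℝ^m with ‖v‖_∞ ≤ 1, the vector f(e, v) = A e + B(φ(K e + v) − v) belongs to the convex hull of the finite set { A_K(𝒥) e : 𝒥 ⊆ {1, …, m} }. -/
/-- The scalar saturation function `sat(x) = sign(x) · min(|x|, 1)`
(saturation bounds normalized to 1). -/
noncomputable def sat (x : ℝ) : ℝ := Real.sign x * min |x| 1

/-- The componentwise saturation function `φ : ℝ^m → ℝ^m`. -/
noncomputable def satVec {m : ℕ} (u : Fin m → ℝ) : Fin m → ℝ := fun j => sat (u j)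

/-- The saturated error dynamics `f(e, v) = A e + B (φ(K e + v) − v)`. -/
noncomputable def errDyn {n m : ℕ} (A : Matrix (Fin n) (Fin n) ℝ)
    (B : Matrix (Fin n) (Fin m) ℝ) (K : Matrix (Fin m) (Fin n) ℝ)
    (e : Fin n → ℝ) (v : Fin m → ℝ) : Fin n → ℝ :=
  A.mulVec e + B.mulVec (satVec (K.mulVec e + v) - v)

/-- `A_K(𝒥) = A + Σ_{j ∈ 𝒥} B_{(j)} K_j`, with `B_{(j)}` the `j`-th column of `B`
and `K_j` the `j`-th row of `K`. -/
noncomputable def AK {n m : ℕ} (A : Matrix (Fin n) (Fin n) ℝ)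
    (B : Matrix (Fin n) (Fin m) ℝ) (K : Matrix (Fin m) (Fin n) ℝ)
    (J : Finset (Fin m)) : Matrix (Fin n) (Fin n) ℝ :=
  A + ∑ j ∈ J, Matrix.vecMulVec (fun i => B i j) (K j)

/-!
For `|v| ≤ 1` the saturation is monotone, `1`-Lipschitz and fixes `v`, so `sat (x + v) - v`
lies between `0` and `x`, i.e. equals `t * x` for some `t ∈ [0, 1]`. Hence
`f(e, v) = A e + ∑ⱼ tⱼ (K e)ⱼ B₍ⱼ₎` lies in the parallelepiped spanned by the vectors
`(K e)ⱼ B₍ⱼ₎`, translated by `A e`; a parallelepiped is the convex hull of its vertices, and these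
are the points `A e + ∑_{j ∈ 𝒥} (K e)ⱼ B₍ⱼ₎ = A_K(𝒥) e`.
-/

open Set Matrix
open scoped Pointwise

lemma sat_eq_max_min (x : ℝ) : sat x = max (-1) (min x 1) := by
  rcases lt_trichotomy x 0 with hx | rfl | hx
  · rw [sat, Real.sign_of_neg hx, abs_of_neg hx]
    grind
  · simp [sat]
  · rw [sat, Real.sign_of_pos hx, abs_of_pos hx]
    grind

lemma sat_add_sub_mem_uIcc (x : ℝ) {v : ℝ} (hv : |v| ≤ 1) : sat (x + v) - v ∈ uIcc 0 x := by
  rw [abs_le] at hv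
  rw [sat_eq_max_min, mem_uIcc]
  rcases le_total 0 x with hx | hx <;> grind

lemma exists_sat_add_sub_eq_mul (x : ℝ) {v : ℝ} (hv : |v| ≤ 1) :
    ∃ t ∈ Icc (0 : ℝ) 1, sat (x + v) - v = t * x := by
  have h := sat_add_sub_mem_uIcc x hv
  rw [← segment_eq_uIcc, segment_eq_image'] at h
  obtain ⟨t, ht, h⟩ := h
  exact ⟨t, ht, by simpa using h.symm⟩

lemma sum_pair_zero_subset_range_finsetSum {ι E : Type*} [Fintype ι] [AddCommGroup E]
    (c : ι → E) : ∑ i, ({0, c i} : Set E) ⊆ range fun J : Finset ι => ∑ i ∈ J, c i := by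
  classical
  intro x hx
  obtain ⟨g, hg, rfl⟩ := (mem_fintype_sum _ _).1 hx
  refine ⟨({i | g i = c i} : Finset ι), ?_⟩
  dsimp only
  rw [Finset.sum_filter]
  refine Finset.sum_congr rfl fun i _ => ?_
  split_ifs with h
  · exact h.symm
  · exact ((hg i).resolve_right h).symm

lemma sum_smul_mem_convexHull_range_finsetSum {ι E : Type*} [Fintype ι] [AddCommGroup E]
    [Module ℝ E] (c : ι → E) {t : ι → ℝ} (ht : ∀ i, t i ∈ Icc 0 1) :
    ∑ i, t i • c i ∈ convexHull ℝ (range fun J : Finset ι => ∑ i ∈ J, c i) := by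
  refine convexHull_mono (sum_pair_zero_subset_range_finsetSum c) ?_
  rw [← parallelepiped_eq_convexHull, mem_parallelepiped_iff]
  exact ⟨t, ⟨fun i => (ht i).1, fun i => (ht i).2⟩, rfl⟩

lemma add_sum_smul_mem_convexHull_range_add_finsetSum {ι E : Type*} [Fintype ι]
    [AddCommGroup E] [Module ℝ E] (a : E) (c : ι → E) {t : ι → ℝ} (ht : ∀ i, t i ∈ Icc 0 1) :
    a + ∑ i, t i • c i ∈ convexHull ℝ (range fun J : Finset ι => a + ∑ i ∈ J, c i) := by
  have h := vadd_mem_vadd_set (a := a) (sum_smul_mem_convexHull_range_finsetSum c ht)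
  rw [← convexHull_vadd, vadd_set_range] at h
  simpa only [vadd_eq_add] using h

section

variable {n m : ℕ} (A : Matrix (Fin n) (Fin n) ℝ) (B : Matrix (Fin n) (Fin m) ℝ)
  (K : Matrix (Fin m) (Fin n) ℝ) (e : Fin n → ℝ)

lemma AK_mulVec (J : Finset (Fin m)) :
    AK A B K J *ᵥ e = A *ᵥ e + ∑ j ∈ J, (K *ᵥ e) j • fun i => B i j := by
  simp only [AK, add_mulVec, sum_mulVec, vecMulVec_mulVec, op_smul_eq_smul]
  rfl

lemma errDyn_eq_add_sum (v : Fin m → ℝ) :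
    errDyn A B K e v = A *ᵥ e + ∑ j, (sat ((K *ᵥ e) j + v j) - v j) • fun i => B i j := by
  rw [errDyn, mulVec_eq_sum _ B]
  congr 1
  exact Fintype.sum_congr _ _ fun j => by rw [op_smul_eq_smul]; rfl

end

/-- For every `e ∈ ℝ^n` and every `v` with `‖v‖_∞ ≤ 1`, the vector
`f(e, v) = A e + B (φ(K e + v) − v)` lies in the convex hull of the finite set
`{ A_K(𝒥) e : 𝒥 ⊆ {1, …, m} }`. -/
theorem stmt1 {n m : ℕ} (A : Matrix (Fin n) (Fin n) ℝ) (B : Matrix (Fin n) (Fin m) ℝ)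
    (K : Matrix (Fin m) (Fin n) ℝ) (e : Fin n → ℝ) (v : Fin m → ℝ)
    (hv : ∀ j, |v j| ≤ 1) :
    errDyn A B K e v ∈
      convexHull ℝ (Set.range (fun J : Finset (Fin m) => (AK A B K J).mulVec e)) := by
  choose t ht hsat using fun j => exists_sat_add_sub_eq_mul ((K *ᵥ e) j) (hv j)
  rw [errDyn_eq_add_sum]
  simp only [hsat, mul_smul, AK_mulVec]
  exact add_sum_smul_mem_convexHull_range_add_finsetSum _ _ ht
end

section
/- Let P ∈ ℝ^{n×n} be symmetric positive definite, λ ∈ [0, 1), W symmetric positive definite, and let (e_k)_{k≥0} be a sequence of square-integrable random vectors in ℝ^n (with arbitrary square-integrable initial condition e_0) satisfying the moment recursion E[e_{k+1}^⊤ P e_{k+1}] ≤ λ · E[e_k^⊤ P e_k] + Tr(PW) for all k. Then for every ε ∈ (0, 1) and every ζ > 0, there exists a finite time t (depending on e_0) such that for all k ≥ t: Pr{ e_k^⊤ P e_k ≤ (1/(ε(1 − λ))) · Tr(PW) + ζ } ≥ 1 − ε. That is, the set ℛ^ε(λ) = { e ∈ ℝ^n : e^⊤ P e ≤ Tr(PW)/(ε(1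 − λ)) + ζ } is a probabilistic ultimate bound with violation probability ε. -/
/-!
Iterating the moment recursion around its fixed point `m = Tr(PW)/(1 - λ)` gives
`E[e_kᵀ P e_k] - m ≤ λᵏ (E[e_0ᵀ P e_0] - m)`, so the second moment eventually drops below `Tr(PW)/(1 - λ) + εζ = ε · (Tr(PW)/(ε(1 - λ)) + ζ)`.
Markov's inequality for the nonnegative variable `e_kᵀ P e_k` then bounds the probability of
leaving the set by `ε`.
-/

open Matrix MeasureTheory Filter Topology

theorem integrable_dotProduct_mulVec_of_memLp {ι Ω : Type*} [Fintype ι] [MeasurableSpace Ω]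
    {μ : Measure Ω} (A : Matrix ι ι ℝ) {f : Ω → ι → ℝ} (hf : MemLp f 2 μ) :
    Integrable (fun ω => f ω ⬝ᵥ A *ᵥ f ω) μ := by
  have hcoord (i : ι) : MemLp (fun ω => f ω i) 2 μ :=
    (ContinuousLinearMap.proj (R := ℝ) (φ := fun _ : ι => ℝ) i).comp_memLp' hf
  have hmulVec (i : ι) : MemLp (fun ω => (A *ᵥ f ω) i) 2 μ := by
    simp only [mulVec, dotProduct]
    exact memLp_finsetSum _ fun j _ => (hcoord j).const_mul (A i j)
  simp only [dotProduct]
  exact integrable_finsetSum _ fun i _ => (hcoord i).integrable_mul (hmulVec i)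

theorem le_pow_mul_sub_add_of_le_mul_add {V : ℕ → ℝ} {r c : ℝ} (hr0 : 0 ≤ r) (hr1 : r ≠ 1)
    (hV : ∀ k, V (k + 1) ≤ r * V k + c) (k : ℕ) :
    V k ≤ r ^ k * (V 0 - c / (1 - r)) + c / (1 - r) := by
  have hfix : r * (c / (1 - r)) + c = c / (1 - r) := by
    field_simp [sub_ne_zero.mpr hr1.symm]
    ring
  induction k with
  | zero => simp
  | succ k ih =>
    calc V (k + 1) ≤ r * V k + c := hV k
      _ ≤ r * (r ^ k * (V 0 - c / (1 - r)) + c / (1 - r)) + c := by gcongr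
      _ = r ^ (k + 1) * (V 0 - c / (1 - r)) + (r * (c / (1 - r)) + c) := by ring
      _ = r ^ (k + 1) * (V 0 - c / (1 - r)) + c / (1 - r) := by rw [hfix]

theorem eventually_lt_div_add_of_le_mul_add {V : ℕ → ℝ} {r c δ : ℝ} (hr0 : 0 ≤ r) (hr1 : r < 1)
    (hV : ∀ k, V (k + 1) ≤ r * V k + c) (hδ : 0 < δ) :
    ∀ᶠ k in atTop, V k < c / (1 - r) + δ := by
  have hlim : Tendsto (fun k => r ^ k * (V 0 - c / (1 - r)) + c / (1 - r)) atTop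
      (𝓝 (c / (1 - r))) := by
    simpa using ((tendsto_pow_atTop_nhds_zero_of_lt_one hr0 hr1).mul_const
      (V 0 - c / (1 - r))).add_const (c / (1 - r))
  filter_upwards [hlim.eventually (gt_mem_nhds (lt_add_of_pos_right _ hδ))] with k hk
  exact (le_pow_mul_sub_add_of_le_mul_add hr0 hr1.ne hV k).trans_lt hk

theorem one_sub_le_measureReal_le_of_integral_lt {Ω : Type*} [MeasurableSpace Ω]
    {μ : Measure Ω} [IsProbabilityMeasure μ] {X : Ω → ℝ} (hX0 : 0 ≤ᵐ[μ] X)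
    (hXi : Integrable X μ) {ε B : ℝ} (hε : 0 < ε) (hlt : ∫ ω, X ω ∂μ < ε * B) :
    1 - ε ≤ μ.real {ω | X ω ≤ B} := by
  have hB : 0 < B := pos_of_mul_pos_right ((integral_nonneg_of_ae hX0).trans_lt hlt) hε.le
  have hmarkov : B * μ.real {ω | B < X ω} < B * ε :=
    calc B * μ.real {ω | B < X ω} ≤ B * μ.real {ω | B ≤ X ω} :=
          mul_le_mul_of_nonneg_left (measureReal_mono fun ω (hω : B < X ω) => hω.le) hB.le
      _ ≤ ∫ ω, X ω ∂μ := mul_meas_ge_le_integral_of_nonneg hX0 hXi B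
      _ < B * ε := by rwa [mul_comm]
  have hcover : μ.real Set.univ ≤ μ.real {ω | X ω ≤ B} + μ.real {ω | B < X ω} := by
    refine (measureReal_mono fun ω _ => ?_).trans (measureReal_union_le _ _)
    exact le_or_gt (X ω) B
  rw [probReal_univ] at hcover
  linarith [lt_of_mul_lt_mul_left hmarkov hB.le]

theorem stmt6_general {n : ℕ} {Ω : Type*} [MeasurableSpace Ω] (μ : Measure Ω)
    [IsProbabilityMeasure μ]
    (P W : Matrix (Fin n) (Fin n) ℝ) (hP : P.PosDef)
    (lam : ℝ) (hlam : lam ∈ Set.Ico (0 : ℝ) 1)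
    (e : ℕ → Ω → Fin n → ℝ)
    (heL2 : ∀ k, MemLp (e k) 2 μ)
    (hrec : ∀ k, ∫ ω, e (k + 1) ω ⬝ᵥ P.mulVec (e (k + 1) ω) ∂μ ≤
      lam * ∫ ω, e k ω ⬝ᵥ P.mulVec (e k ω) ∂μ + (P * W).trace)
    (ε : ℝ) (hε : ε ∈ Set.Ioo (0 : ℝ) 1) (ζ : ℝ) (hζ : 0 < ζ) :
    ∃ t : ℕ, ∀ k, t ≤ k →
      1 - ε ≤ (μ {ω | e k ω ⬝ᵥ P.mulVec (e k ω) ≤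
        1 / (ε * (1 - lam)) * (P * W).trace + ζ}).toReal := by
  obtain ⟨hlam0, hlam1⟩ := hlam
  obtain ⟨t, ht⟩ := eventually_atTop.mp <|
    eventually_lt_div_add_of_le_mul_add (V := fun k => ∫ ω, e k ω ⬝ᵥ P *ᵥ e k ω ∂μ)
      hlam0 hlam1 hrec (mul_pos hε.1 hζ)
  refine ⟨t, fun k hk => one_sub_le_measureReal_le_of_integral_lt
    (ae_of_all _ fun ω => by simpa using hP.posSemidef.dotProduct_mulVec_nonneg (e k ω))
    (integrable_dotProduct_mulVec_of_memLp P (heL2 k)) hε.1 ?_⟩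
  have hlam_ne : 1 - lam ≠ 0 := by linarith
  calc _ < (P * W).trace / (1 - lam) + ε * ζ := ht k hk
    _ = ε * (1 / (ε * (1 - lam)) * (P * W).trace + ζ) := by field_simp [hε.1.ne']

/-- If `(e_k)` are square-integrable random vectors (arbitrary square-integrable
initial condition) whose second moments satisfy the recursion
`E[e_{k+1}ᵀ P e_{k+1}] ≤ λ E[e_kᵀ P e_k] + Tr(PW)`, then for every `ε ∈ (0,1)`
and every `ζ > 0` there is a finite time `t` such that for all `k ≥ t`,
`Pr{ e_kᵀ P e_k ≤ Tr(PW)/(ε(1 − λ)) + ζ } ≥ 1 − ε`; i.e. the set `ℛ^ε(λ)` is a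
probabilistic ultimate bound with violation probability `ε`. -/
theorem stmt6 {n : ℕ} {Ω : Type*} [MeasurableSpace Ω] (μ : Measure Ω)
    [IsProbabilityMeasure μ]
    (P W : Matrix (Fin n) (Fin n) ℝ) (hP : P.PosDef) (hW : W.PosDef)
    (lam : ℝ) (hlam : lam ∈ Set.Ico (0 : ℝ) 1)
    (e : ℕ → Ω → Fin n → ℝ)
    (heMeas : ∀ k, Measurable (e k)) (heL2 : ∀ k, MemLp (e k) 2 μ)
    (hrec : ∀ k, ∫ ω, e (k + 1) ω ⬝ᵥ P.mulVec (e (k + 1) ω) ∂μ ≤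
      lam * ∫ ω, e k ω ⬝ᵥ P.mulVec (e k ω) ∂μ + (P * W).trace)
    (ε : ℝ) (hε : ε ∈ Set.Ioo (0 : ℝ) 1) (ζ : ℝ) (hζ : 0 < ζ) :
    ∃ t : ℕ, ∀ k, t ≤ k →
      1 - ε ≤ (μ {ω | e k ω ⬝ᵥ P.mulVec (e k ω) ≤
        1 / (ε * (1 - lam)) * (P * W).trace + ζ}).toReal :=
  stmt6_general μ P W hP lam hlam e heL2 hrec ε hε ζ hζ
end

section
/- Let P ∈ ℝ^{n×n} be symmetric positive definite, K ∈ ℝ^{m×n} with every row K_j nonzero, and v ∈ ℝ^m with |v_j| < 1 for every j ∈ {1, …, m}. Define r_L = min over j ∈ {1, …, m} of (1 − |v_j|)² / (K_j P^{−1} K_j^⊤). Then for every e ∈ ℝ^n with e^⊤ P e ≤ r_L, one has |K_j e + v_j| ≤ 1 for every j, and consequently φ(K e + v) = K e + v; i.e., the ellipsoid ℰ(P, r_L) = { e : e^⊤ P e ≤ r_L } is contained in the region of linearity of the saturation. -/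
/-!
Cauchy–Schwarz for the inner product `⟪x, y⟫ = xᵀ P y`, applied to `e` and `P⁻¹ K_jᵀ`, gives
`(K_j e)² ≤ (K_j P⁻¹ K_jᵀ) (eᵀ P e) ≤ (1 - |v_j|)²`, hence `|K_j e + v_j| ≤ |K_j e| + |v_j| ≤ 1`,
and the saturation is the identity on `[-1, 1]`.
-/

open Matrix

theorem sat_eq_self {u : ℝ} (h : |u| ≤ 1) : sat u = u := by
  rw [sat, min_eq_left h]
  rcases lt_trichotomy u 0 with hneg | rfl | hpos
  · rw [Real.sign_of_neg hneg, abs_of_neg hneg]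
    ring
  · simp
  · rw [Real.sign_of_pos hpos, abs_of_pos hpos]
    ring

theorem satVec_eq_self {m : ℕ} {u : Fin m → ℝ} (h : ∀ j, |u j| ≤ 1) : satVec u = u :=
  funext fun j => sat_eq_self (h j)

namespace Matrix.PosDef

variable {ι : Type*} [Fintype ι] [DecidableEq ι] {P : Matrix ι ι ℝ}

theorem sq_dotProduct_le (hP : P.PosDef) (k e : ι → ℝ) :
    (k ⬝ᵥ e) ^ 2 ≤ (k ⬝ᵥ P⁻¹ *ᵥ k) * (e ⬝ᵥ P *ᵥ e) := by
  have hPk : P *ᵥ (P⁻¹ *ᵥ k) = k := by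
    rw [mulVec_mulVec, mul_nonsing_inv _ hP.det_pos.ne'.isUnit, one_mulVec]
  have hcs := @real_inner_mul_inner_self_le _ (P.toSeminormedAddCommGroup hP.posSemidef)
    (P.toInnerProductSpace hP.posSemidef) e (P⁻¹ *ᵥ k)
  change (P *ᵥ (P⁻¹ *ᵥ k)) ⬝ᵥ star e * ((P *ᵥ (P⁻¹ *ᵥ k)) ⬝ᵥ star e)
    ≤ (P *ᵥ e) ⬝ᵥ star e * ((P *ᵥ (P⁻¹ *ᵥ k)) ⬝ᵥ star (P⁻¹ *ᵥ k)) at hcs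
  simp only [hPk, star_trivial, dotProduct_comm (P *ᵥ e)] at hcs
  linarith

theorem abs_dotProduct_le (hP : P.PosDef) {k e : ι → ℝ} {a r : ℝ} (ha : 0 ≤ a)
    (he : e ⬝ᵥ P *ᵥ e ≤ r) (hr : r ≤ a ^ 2 / (k ⬝ᵥ P⁻¹ *ᵥ k)) : |k ⬝ᵥ e| ≤ a := by
  set c := k ⬝ᵥ P⁻¹ *ᵥ k
  have hc : 0 ≤ c := by simpa using hP.inv.posSemidef.re_dotProduct_nonneg k
  have hca : c * (a ^ 2 / c) ≤ a ^ 2 := by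
    rcases hc.eq_or_lt with hc0 | hcpos
    · simp [← hc0, sq_nonneg]
    · rw [mul_div_cancel₀ _ hcpos.ne']
  refine abs_le_of_sq_le_sq ?_ ha
  calc (k ⬝ᵥ e) ^ 2 ≤ c * (e ⬝ᵥ P *ᵥ e) := hP.sq_dotProduct_le k e
    _ ≤ c * (a ^ 2 / c) := mul_le_mul_of_nonneg_left (he.trans hr) hc
    _ ≤ a ^ 2 := hca

end Matrix.PosDef

theorem stmt8_general {n m : ℕ} (hm : 0 < m)
    (P : Matrix (Fin n) (Fin n) ℝ) (hP : P.PosDef)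
    (K : Matrix (Fin m) (Fin n) ℝ)
    (v : Fin m → ℝ) (hv : ∀ j, |v j| < 1)
    (rL : ℝ)
    (hrL : rL = Finset.univ.inf' ⟨⟨0, hm⟩, Finset.mem_univ _⟩
      (fun j : Fin m => (1 - |v j|) ^ 2 / (K j ⬝ᵥ P⁻¹.mulVec (K j)))) :
    ∀ e : Fin n → ℝ, e ⬝ᵥ P.mulVec e ≤ rL →
      (∀ j, |K.mulVec e j + v j| ≤ 1) ∧ satVec (K.mulVec e + v) = K.mulVec e + v := by
  intro e he
  have hrow : ∀ j, |K.mulVec e j| ≤ 1 - |v j| := fun j =>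
    hP.abs_dotProduct_le (sub_nonneg.2 (hv j).le) he
      (hrL ▸ Finset.inf'_le _ (Finset.mem_univ j))
  have hlin : ∀ j, |K.mulVec e j + v j| ≤ 1 := fun j =>
    (abs_add_le _ _).trans (by linarith [hrow j])
  exact ⟨hlin, satVec_eq_self hlin⟩

/-- For `P ≻ 0`, `K` with nonzero rows, and `v` with `|v_j| < 1`, setting
`r_L = min_j (1 − |v_j|)² / (K_j P⁻¹ K_jᵀ)`, every `e` with `eᵀ P e ≤ r_L`
satisfies `|K_j e + v_j| ≤ 1` for every `j`, and hence `φ(K e + v) = K e + v`: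
the ellipsoid `ℰ(P, r_L)` lies in the region of linearity of the saturation. -/
theorem stmt8 {n m : ℕ} (hm : 0 < m)
    (P : Matrix (Fin n) (Fin n) ℝ) (hP : P.PosDef)
    (K : Matrix (Fin m) (Fin n) ℝ) (hK : ∀ j, K j ≠ 0)
    (v : Fin m → ℝ) (hv : ∀ j, |v j| < 1)
    (rL : ℝ)
    (hrL : rL = Finset.univ.inf' ⟨⟨0, hm⟩, Finset.mem_univ _⟩
      (fun j : Fin m => (1 - |v j|) ^ 2 / (K j ⬝ᵥ P⁻¹.mulVec (K j)))) :
    ∀ e : Fin n → ℝ, e ⬝ᵥ P.mulVec e ≤ rL →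
      (∀ j, |K.mulVec e j + v j| ≤ 1) ∧ satVec (K.mulVec e + v) = K.mulVec e + v :=
  stmt8_general hm P hP K v hv rL hrL
end

section
/- Let X and Y be nonnegative integrable random variables, let r_L > 0, c ≥ 0, and 0 ≤ λ_L ≤ λ. Set m = E[X] and consider the events S₁ = {X ≤ r_L} and S₂ = {X > r_L}. Suppose the conditional bounds E[Y · 1_{S₁}] ≤ (λ_L · m + c) · Pr{S₁} and E[Y · 1_{S₂}] ≤ (λ · m + c) · Pr{S₂} hold. Then E[Y] ≤ λ_L · m + ((λ − λ_L)/r_L) · m² + c. -/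
open MeasureTheory

/-- Let `X, Y` be nonnegative integrable random variables, `r_L > 0`, `c ≥ 0`,
`0 ≤ λ_L ≤ λ`, and `m = E[X]`. If `E[Y · 1_{X ≤ r_L}] ≤ (λ_L m + c) Pr{X ≤ r_L}`
and `E[Y · 1_{X > r_L}] ≤ (λ m + c) Pr{X > r_L}`, then
`E[Y] ≤ λ_L m + ((λ − λ_L)/r_L) m² + c`. -/
theorem stmt10 {Ω : Type*} [MeasurableSpace Ω] (μ : Measure Ω)
    [IsProbabilityMeasure μ]
    (X Y : Ω → ℝ) (hXm : Measurable X) (hYm : Measurable Y)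
    (hXint : Integrable X μ) (hYint : Integrable Y μ)
    (hX0 : ∀ ω, 0 ≤ X ω) (hY0 : ∀ ω, 0 ≤ Y ω)
    (rL c lamL lam : ℝ) (hrL : 0 < rL) (hc : 0 ≤ c)
    (hlamL : 0 ≤ lamL) (hll : lamL ≤ lam)
    (hS1 : ∫ ω in {ω | X ω ≤ rL}, Y ω ∂μ ≤
      (lamL * (∫ ω, X ω ∂μ) + c) * (μ {ω | X ω ≤ rL}).toReal)
    (hS2 : ∫ ω in {ω | rL < X ω}, Y ω ∂μ ≤
      (lam * (∫ ω, X ω ∂μ) + c) * (μ {ω | rL < X ω}).toReal) :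
    ∫ ω, Y ω ∂μ ≤
      lamL * (∫ ω, X ω ∂μ) + (lam - lamL) / rL * (∫ ω, X ω ∂μ) ^ 2 + c := by
  set m := ∫ ω, X ω ∂μ with hm
  have hS : MeasurableSet {ω | X ω ≤ rL} := hXm measurableSet_Iic
  have hcompl : {ω | X ω ≤ rL}ᶜ = {ω | rL < X ω} := by
    ext ω; simp [not_le]
  have hsplit : ∫ ω in {ω | X ω ≤ rL}, Y ω ∂μ + ∫ ω in {ω | rL < X ω}, Y ω ∂μ
      = ∫ ω, Y ω ∂μ := by
    rw [← hcompl]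
    exact integral_add_compl hS hYint
  set p1 := (μ {ω | X ω ≤ rL}).toReal with hp1
  set p2 := (μ {ω | rL < X ω}).toReal with hp2
  have hpsum : p1 + p2 = 1 := by
    rw [hp1, hp2, ← hcompl, ← ENNReal.toReal_add (measure_ne_top _ _) (measure_ne_top _ _),
      prob_add_prob_compl hS]
    simp
  have hm0 : 0 ≤ m := integral_nonneg hX0
  have hmarkov : rL * p2 ≤ m := by
    have h1 : μ {ω | rL < X ω} ≤ μ {ω | rL ≤ X ω} :=
      measure_mono (fun ω h => (le_of_lt (h : rL < X ω) : rL ≤ X ω))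
    have h2 : rL * (μ {ω | rL ≤ X ω}).toReal ≤ m :=
      mul_meas_ge_le_integral_of_nonneg (Filter.Eventually.of_forall hX0)
        hXint rL
    calc rL * p2 ≤ rL * (μ {ω | rL ≤ X ω}).toReal := by
          apply mul_le_mul_of_nonneg_left _ hrL.le
          exact ENNReal.toReal_mono (measure_ne_top _ _) h1
      _ ≤ m := h2
  have hp2nn : 0 ≤ p2 := ENNReal.toReal_nonneg
  have key : ∫ ω, Y ω ∂μ ≤ lamL * m + (lam - lamL) * m * p2 + c := by
    rw [← hsplit]
    nlinarith [hS1, hS2, hpsum, mul_nonneg hlamL hm0, mul_nonneg (mul_nonneg hlamL hm0) hp2nn, mul_nonneg hc hp2nn]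
  have h2 : (lam - lamL) * m * p2 ≤ (lam - lamL) / rL * m ^ 2 := by
    rw [div_mul_eq_mul_div, le_div_iff₀ hrL]
    nlinarith [mul_le_mul_of_nonneg_left hmarkov (mul_nonneg (sub_nonneg.2 hll) hm0)]
  linarith
end

section
/- Let 0 ≤ λ_L < λ < 1, r_L > 0, c > 0 with c/(1 − λ) < r_L, and let λ̄* ∈ [λ_L, λ] be the unique solution of c/(1 − λ̄*) = ((λ̄* − λ_L)/(λ − λ_L)) · r_L. Let (a_i)_{i≥0} be a sequence of nonnegative reals with a_0 = 0 satisfying the quadratic recursion a_{i+1} ≤ λ_L · a_i + ((λ − λ_L)/r_L) · a_i² + c for all i ≥ 0. Then a_i ≤ ((1 − (λ̄*)^i)/(1 − λ̄*)) · c for all i ≥ 0. -/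
/-- Let `0 ≤ λ_L < λ < 1`, `r_L > 0`, `c > 0` with `c/(1 − λ) < r_L`, and let
`λ̄* ∈ [λ_L, λ]` solve `c/(1 − λ̄*) = ((λ̄* − λ_L)/(λ − λ_L)) r_L`. If `(a_i)` is a
sequence of nonnegative reals with `a_0 = 0` satisfying the quadratic recursion
`a_{i+1} ≤ λ_L a_i + ((λ − λ_L)/r_L) a_i² + c`, then
`a_i ≤ ((1 − (λ̄*)^i)/(1 − λ̄*)) c` for all `i`. -/
theorem stmt12 (lamL lam rL c lbar : ℝ)
    (h0 : 0 ≤ lamL) (h1 : lamL < lam) (h2 : lam < 1)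
    (hrL : 0 < rL) (hc : 0 < c) (hcond : c / (1 - lam) < rL)
    (hbar : lbar ∈ Set.Icc lamL lam)
    (heq : c / (1 - lbar) = (lbar - lamL) / (lam - lamL) * rL)
    (a : ℕ → ℝ) (ha0 : a 0 = 0) (hpos : ∀ i, 0 ≤ a i)
    (hrec : ∀ i, a (i + 1) ≤ lamL * a i + (lam - lamL) / rL * a i ^ 2 + c) :
    ∀ i, a i ≤ (1 - lbar ^ i) / (1 - lbar) * c := by
  obtain ⟨hl1, hl2⟩ := hbar
  have h1mb : 0 < 1 - lbar := by linarith
  have hlb0 : 0 ≤ lbar := le_trans h0 hl1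
  have hml : 0 < lam - lamL := by linarith
  intro i
  induction i with
  | zero => simp [ha0]
  | succ i ih =>
    have hbpos : 0 ≤ (1 - lbar ^ i) / (1 - lbar) * c := le_trans (hpos i) ih
    have hp : (0:ℝ) ≤ lbar ^ i := pow_nonneg hlb0 i
    have hbc : (1 - lbar ^ i) / (1 - lbar) * c ≤ (lbar - lamL) / (lam - lamL) * rL := by
      rw [← heq]
      rw [div_mul_eq_mul_div, div_le_div_iff₀ h1mb h1mb]
      nlinarith [mul_nonneg (mul_nonneg hp hc.le) h1mb.le]
    have hK : (lam - lamL) / rL * ((1 - lbar ^ i) / (1 - lbar) * c) ≤ lbar - lamL := by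
      have := mul_le_mul_of_nonneg_left hbc (le_of_lt (div_pos hml hrL))
      calc (lam - lamL) / rL * ((1 - lbar ^ i) / (1 - lbar) * c)
          ≤ (lam - lamL) / rL * ((lbar - lamL) / (lam - lamL) * rL) := this
        _ = lbar - lamL := by
            field_simp
    have hsq : a i ^ 2 ≤ ((1 - lbar ^ i) / (1 - lbar) * c) ^ 2 := by
      have := hpos i
      nlinarith
    have hKnn : (0:ℝ) ≤ (lam - lamL) / rL := le_of_lt (div_pos hml hrL)
    have step : a (i + 1) ≤ lbar * ((1 - lbar ^ i) / (1 - lbar) * c) + c := by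
      have h3 := hrec i
      have h4 : (lam - lamL) / rL * a i ^ 2 ≤
          (lam - lamL) / rL * ((1 - lbar ^ i) / (1 - lbar) * c) ^ 2 :=
        mul_le_mul_of_nonneg_left hsq hKnn
      nlinarith [mul_le_mul_of_nonneg_right hK hbpos, mul_le_mul_of_nonneg_left ih h0]
    calc a (i + 1) ≤ lbar * ((1 - lbar ^ i) / (1 - lbar) * c) + c := step
      _ = (1 - lbar ^ (i + 1)) / (1 - lbar) * c := by
          field_simp
          ring
end

section
/- Let 0 ≤ λ_L < λ < 1, r_L > 0, c > 0 with c/(1 − λ) < r_L, and let λ̄* ∈ [λ_L, λ] be the unique solution of c/(1 − λ̄*) = ((λ̄* − λ_L)/(λ − λ_L)) · r_L. Let (a_i)_{i≥0} be a sequence of nonnegative reals satisfying a_{i+1} ≤ λ_L · a_i + ((λ − λ_L)/r_L) · a_i² + c for all i ≥ 0. If a_i ≤ c/(1 − λ̄*) for some index i, then a_{i+j} ≤ c/(1 − λ̄*) for every j ≥ 0; i.e., the sublevel value c/(1 − λ̄*) is invariant under the quadratic recursion. -/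
/-- Let `0 ≤ λ_L < λ < 1`, `r_L > 0`, `c > 0` with `c/(1 − λ) < r_L`, and let
`λ̄* ∈ [λ_L, λ]` solve `c/(1 − λ̄*) = ((λ̄* − λ_L)/(λ − λ_L)) r_L`. If `(a_i)` is a
nonnegative sequence satisfying `a_{i+1} ≤ λ_L a_i + ((λ − λ_L)/r_L) a_i² + c`
and `a_i ≤ c/(1 − λ̄*)` for some `i`, then `a_{i+j} ≤ c/(1 − λ̄*)` for all `j`:
the sublevel value `c/(1 − λ̄*)` is invariant under the quadratic recursion. -/
theorem stmt13 (lamL lam rL c lbar : ℝ)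
    (h0 : 0 ≤ lamL) (h1 : lamL < lam) (h2 : lam < 1)
    (hrL : 0 < rL) (hc : 0 < c) (hcond : c / (1 - lam) < rL)
    (hbar : lbar ∈ Set.Icc lamL lam)
    (heq : c / (1 - lbar) = (lbar - lamL) / (lam - lamL) * rL)
    (a : ℕ → ℝ) (hpos : ∀ i, 0 ≤ a i)
    (hrec : ∀ i, a (i + 1) ≤ lamL * a i + (lam - lamL) / rL * a i ^ 2 + c)
    (i : ℕ) (hi : a i ≤ c / (1 - lbar)) :
    ∀ j, a (i + j) ≤ c / (1 - lbar) := by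
  have hl1 : lbar < 1 := lt_of_le_of_lt hbar.2 h2
  have h1l : (0:ℝ) < 1 - lbar := by linarith
  have hll : (0:ℝ) < lam - lamL := by linarith
  -- key coefficient identity: (lam-lamL)/rL * M = lbar - lamL, where M = c/(1-lbar)
  have hM : (lam - lamL) / rL * (c / (1 - lbar)) = lbar - lamL := by
    rw [heq]; field_simp
  intro j
  induction j with
  | zero => simpa using hi
  | succ n ih =>
    have hrecn := hrec (i + n)
    have ha := hpos (i + n)
    have hq : a (i + n) ^ 2 ≤ c / (1 - lbar) * a (i + n) := by
      have := mul_le_mul_of_nonneg_right ih ha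
      nlinarith
    have hq2 : (lam - lamL) / rL * a (i + n) ^ 2 ≤ (lbar - lamL) * a (i + n) := by
      have hco : 0 ≤ (lam - lamL) / rL := by positivity
      calc (lam - lamL) / rL * a (i + n) ^ 2
          ≤ (lam - lamL) / rL * (c / (1 - lbar) * a (i + n)) :=
            mul_le_mul_of_nonneg_left hq hco
        _ = (lbar - lamL) * a (i + n) := by rw [← mul_assoc, hM]
    have hfin : lbar * a (i + n) + c ≤ c / (1 - lbar) := by
      have hb0 : 0 ≤ lbar := le_trans h0 hbar.1
      have hMc : c / (1 - lbar) * (1 - lbar) = c := div_mul_cancel₀ c (ne_of_gt h1l)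
      nlinarith [mul_le_mul_of_nonneg_left ih hb0]
    show a (i + n + 1) ≤ c / (1 - lbar)
    nlinarith
end

section
/- Let P ∈ ℝ^{n×n} be symmetric positive definite, λ̂ ∈ [0, 1), W symmetric positive definite, and let (e_{i|k})_{i,k≥0} be a doubly indexed family of square-integrable random vectors in ℝ^n such that: (i) e_{0|0} = 0 almost surely; (ii) for every k and every i, E[e_{i+1|k}^⊤ P e_{i+1|k}] ≤ λ̂ · E[e_{i|k}^⊤ P e_{i|k}] + Tr(PW); and (iii) for every k, E[e_{0|k+1}^⊤ P e_{0|k+1}] ≤ E[e_{1|k}^⊤ P e_{1|k}] (as guaranteed by the interpolated initialization e_{0|k+1} = ξ_{k+1} e_{1|k} with ξ_{k+1} ∈ [0, 1]). Then E[e_{i|k}^⊤ P e_{i|k}] ≤ ((1 − λ̂^{i+k})/(1 − λ̂)) · Tr(PW) for all i, k ≥ 0, and consequently, for every ε ∈ (0, 1), Pr{ e_{i|k}^⊤ P e_{i|k} ≤ ((1 − λ̂^{i+k})/(ε(1 − λ̂))) · Tr(PW) } ≥ 1 − ε whenever i + k ≥ 1; i.e., the shifted sets ℛ^ε_{i+k}(λ̂)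 are probabilistic reachable sets for the closed-loop prediction errors. -/
open Matrix MeasureTheory

/-! The second moments `m i k = E[e_{i|k}ᵀ P e_{i|k}]` obey the one-step contraction
`m (i+1) k ≤ λ̂ m i k + Tr(PW)` along each prediction horizon, and the warm start
`m 0 (k+1) ≤ m 1 k` lets row `k + 1` begin where row `k` stood after one step. Hence `m i k`
is dominated by the geometric sum `(∑_{j < i+k} λ̂^j) Tr(PW)`, by induction on `k` and then `i`.
Markov's inequality for the nonnegative quadratic form then gives the probabilistic reachable
sets; when the moment bound is `0` the form vanishes almost surely instead. -/

section ClosedLoopRecursion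

open Finset

variable {m : ℕ → ℕ → ℝ} {lam c : ℝ}

lemma geom_sum_mul_succ_ge_of_le (hlam : 0 ≤ lam) {x : ℝ} {N : ℕ}
    (hx : x ≤ (∑ j ∈ range N, lam ^ j) * c) :
    lam * x + c ≤ (∑ j ∈ range (N + 1), lam ^ j) * c :=
  calc lam * x + c ≤ lam * ((∑ j ∈ range N, lam ^ j) * c) + c := by gcongr
    _ = (∑ j ∈ range (N + 1), lam ^ j) * c := by rw [geom_sum_succ]; ring

lemma le_geom_sum_mul_of_row (hlam : 0 ≤ lam) (hrec : ∀ i k, m (i + 1) k ≤ lam * m i k + c)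
    {k : ℕ} (hbase : m 0 k ≤ (∑ j ∈ range k, lam ^ j) * c) (i : ℕ) :
    m i k ≤ (∑ j ∈ range (i + k), lam ^ j) * c := by
  induction i with
  | zero => simpa using hbase
  | succ i ih =>
    rw [Nat.add_right_comm]
    exact (hrec i k).trans (geom_sum_mul_succ_ge_of_le hlam ih)

theorem le_geom_sum_mul_of_closedLoop (hlam : 0 ≤ lam) (h00 : m 0 0 ≤ 0)
    (hrec : ∀ i k, m (i + 1) k ≤ lam * m i k + c) (hinit : ∀ k, m 0 (k + 1) ≤ m 1 k)
    (i k : ℕ) : m i k ≤ (∑ j ∈ range (i + k), lam ^ j) * c := by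
  induction k generalizing i with
  | zero => exact le_geom_sum_mul_of_row hlam hrec (by simpa using h00) i
  | succ k ih =>
    refine le_geom_sum_mul_of_row hlam hrec ?_ i
    simpa [Nat.add_comm 1 k] using (hinit k).trans (ih 1)

end ClosedLoopRecursion

lemma one_sub_le_measureReal_le_of_integral_le {Ω : Type*} [MeasurableSpace Ω] {μ : Measure Ω}
    [IsProbabilityMeasure μ] {f : Ω → ℝ}
    (hf : 0 ≤ᵐ[μ] f) (hfi : Integrable f μ) {ε a : ℝ} (hε : 0 < ε)
    (hint : ∫ ω, f ω ∂μ ≤ ε * a) : 1 - ε ≤ μ.real {ω | f ω ≤ a} := by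
  have ha : 0 ≤ a := nonneg_of_mul_nonneg_right ((integral_nonneg_of_ae hf).trans hint) hε
  have htail : μ.real {ω | a < f ω} ≤ ε := by
    rcases ha.eq_or_lt with rfl | ha
    · have hf0 : f =ᵐ[μ] 0 :=
        (integral_eq_zero_iff_of_nonneg_ae hf hfi).mp
          (le_antisymm (by simpa using hint) (integral_nonneg_of_ae hf))
      have hnull : μ {ω | 0 < f ω} = 0 := by
        simpa only [not_le] using ae_iff.mp (hf0.mono fun ω h => h.le : ∀ᵐ ω ∂μ, f ω ≤ 0)
      simp [measureReal_def, hnull, hε.le]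
    · have hmarkov := mul_meas_ge_le_integral_of_nonneg hf hfi a
      have : μ.real {ω | a ≤ f ω} ≤ ε := le_of_mul_le_mul_left (by linarith) ha
      exact (measureReal_mono fun ω (hω : a < f ω) => hω.le).trans this
  have hcover : 1 ≤ μ.real {ω | f ω ≤ a} + μ.real {ω | a < f ω} := by
    rw [← probReal_univ (μ := μ)]
    exact (measureReal_mono fun ω _ => le_or_gt (f ω) a).trans (measureReal_union_le _ _)
  linarith

lemma integrable_dotProduct_mulVec {Ω ι : Type*} [MeasurableSpace Ω] [Fintype ι]
    {μ : Measure Ω} (A : Matrix ι ι ℝ) {f : Ω → ι → ℝ} (hf : MemLp f 2 μ) :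
    Integrable (fun ω => f ω ⬝ᵥ A *ᵥ f ω) μ := by
  have hprod : ∀ a b, Integrable (fun ω => f ω a * (A a b * f ω b)) μ := fun a b =>
    (hf.eval a).integrable_mul ((hf.eval b).const_mul (A a b))
  simp only [dotProduct, mulVec, Finset.mul_sum]
  exact integrable_finsetSum _ fun a _ => integrable_finsetSum _ fun b _ => hprod a b

theorem stmt14_general {n : ℕ} {Ω : Type*} [MeasurableSpace Ω] (μ : Measure Ω)
    [IsProbabilityMeasure μ]
    (P W : Matrix (Fin n) (Fin n) ℝ) (hP : P.PosDef)
    (lam : ℝ) (hlam : lam ∈ Set.Ico (0 : ℝ) 1)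
    (e : ℕ → ℕ → Ω → Fin n → ℝ)
    (heL2 : ∀ i k, MemLp (e i k) 2 μ)
    (h00 : ∀ᵐ ω ∂μ, e 0 0 ω = 0)
    (hrec : ∀ i k, ∫ ω, e (i + 1) k ω ⬝ᵥ P.mulVec (e (i + 1) k ω) ∂μ ≤
      lam * ∫ ω, e i k ω ⬝ᵥ P.mulVec (e i k ω) ∂μ + (P * W).trace)
    (hinit : ∀ k, ∫ ω, e 0 (k + 1) ω ⬝ᵥ P.mulVec (e 0 (k + 1) ω) ∂μ ≤
      ∫ ω, e 1 k ω ⬝ᵥ P.mulVec (e 1 k ω) ∂μ) :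
    (∀ i k, ∫ ω, e i k ω ⬝ᵥ P.mulVec (e i k ω) ∂μ ≤
      (1 - lam ^ (i + k)) / (1 - lam) * (P * W).trace) ∧
    (∀ ε : ℝ, ε ∈ Set.Ioo (0 : ℝ) 1 → ∀ i k, 1 ≤ i + k →
      1 - ε ≤ (μ {ω | e i k ω ⬝ᵥ P.mulVec (e i k ω) ≤
        (1 - lam ^ (i + k)) / (ε * (1 - lam)) * (P * W).trace}).toReal) := by
  obtain ⟨hlam0, hlam1⟩ := hlam
  have hlam_ne : lam ≠ 1 := hlam1.ne
  have hquad00 : ∫ ω, e 0 0 ω ⬝ᵥ P.mulVec (e 0 0 ω) ∂μ ≤ 0 :=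
    (integral_eq_zero_of_ae (h00.mono fun ω hω => by simp [hω])).le
  have hmoment : ∀ i k, ∫ ω, e i k ω ⬝ᵥ P.mulVec (e i k ω) ∂μ ≤
      (1 - lam ^ (i + k)) / (1 - lam) * (P * W).trace := fun i k => by
    have := le_geom_sum_mul_of_closedLoop (m := fun i k => ∫ ω, e i k ω ⬝ᵥ P *ᵥ e i k ω ∂μ)
      hlam0 hquad00 hrec hinit i k
    rwa [geom_sum_eq hlam_ne, ← neg_div_neg_eq, neg_sub, neg_sub] at this
  refine ⟨hmoment, fun ε ⟨hε0, _⟩ i k _ => ?_⟩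
  have hquad_nonneg : 0 ≤ᵐ[μ] fun ω => e i k ω ⬝ᵥ P *ᵥ e i k ω :=
    .of_forall fun ω => by simpa using hP.posSemidef.dotProduct_mulVec_nonneg (e i k ω)
  refine one_sub_le_measureReal_le_of_integral_le hquad_nonneg
    (integrable_dotProduct_mulVec P (heL2 i k)) hε0 ((hmoment i k).trans_eq ?_)
  have : 1 - lam ≠ 0 := (sub_pos.mpr hlam1).ne'
  field_simp

/-- Closed-loop PRS: for a doubly indexed family of square-integrable prediction
errors `e_{i|k}` with `e_{0|0} = 0` a.s., the moment recursion
`E[e_{i+1|k}ᵀ P e_{i+1|k}] ≤ λ̂ E[e_{i|k}ᵀ P e_{i|k}] + Tr(PW)`, and the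
initialization property `E[e_{0|k+1}ᵀ P e_{0|k+1}] ≤ E[e_{1|k}ᵀ P e_{1|k}]`,
one has `E[e_{i|k}ᵀ P e_{i|k}] ≤ ((1 − λ̂^{i+k})/(1 − λ̂)) Tr(PW)` for all `i, k`,
and consequently, for every `ε ∈ (0,1)` and all `i + k ≥ 1`,
`Pr{ e_{i|k}ᵀ P e_{i|k} ≤ ((1 − λ̂^{i+k})/(ε(1 − λ̂))) Tr(PW) } ≥ 1 − ε`. -/
theorem stmt14 {n : ℕ} {Ω : Type*} [MeasurableSpace Ω] (μ : Measure Ω)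
    [IsProbabilityMeasure μ]
    (P W : Matrix (Fin n) (Fin n) ℝ) (hP : P.PosDef) (hW : W.PosDef)
    (lam : ℝ) (hlam : lam ∈ Set.Ico (0 : ℝ) 1)
    (e : ℕ → ℕ → Ω → Fin n → ℝ)
    (heMeas : ∀ i k, Measurable (e i k)) (heL2 : ∀ i k, MemLp (e i k) 2 μ)
    (h00 : ∀ᵐ ω ∂μ, e 0 0 ω = 0)
    (hrec : ∀ i k, ∫ ω, e (i + 1) k ω ⬝ᵥ P.mulVec (e (i + 1) k ω) ∂μ ≤
      lam * ∫ ω, e i k ω ⬝ᵥ P.mulVec (e i k ω) ∂μ + (P * W).trace)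
    (hinit : ∀ k, ∫ ω, e 0 (k + 1) ω ⬝ᵥ P.mulVec (e 0 (k + 1) ω) ∂μ ≤
      ∫ ω, e 1 k ω ⬝ᵥ P.mulVec (e 1 k ω) ∂μ) :
    (∀ i k, ∫ ω, e i k ω ⬝ᵥ P.mulVec (e i k ω) ∂μ ≤
      (1 - lam ^ (i + k)) / (1 - lam) * (P * W).trace) ∧
    (∀ ε : ℝ, ε ∈ Set.Ioo (0 : ℝ) 1 → ∀ i k, 1 ≤ i + k →
      1 - ε ≤ (μ {ω | e i k ω ⬝ᵥ P.mulVec (e i k ω) ≤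
        (1 - lam ^ (i + k)) / (ε * (1 - lam)) * (P * W).trace}).toReal) :=
  stmt14_general μ P W hP lam hlam e heL2 h00 hrec hinit
end

section
/- Let A ∈ ℝ^{n×n}, B ∈ ℝ^{n×m}, K_f ∈ ℝ^{m×n}, a set 𝒱 ⊆ ℝ^m, a family of sets (𝒵_j)_{j≥0} with 𝒵_j ⊆ ℝ^n, and a terminal set 𝒵_f ⊆ ℝ^n satisfying: (A + B K_f) 𝒵_f ⊆ 𝒵_f (positive invariance under the terminal control law), K_f 𝒵_f ⊆ 𝒱, and 𝒵_f ⊆ 𝒵_j for every j. Fix N ≥ 1 and k ≥ 0, and suppose there exist sequences z_0, …, z_N ∈ ℝ^n and v_0, …, v_{N−1} ∈ ℝ^m such that z_{i+1} = A z_i + B v_i for i = 0, …, N−1, v_i ∈ 𝒱 for i = 0, …, N−1, z_i ∈ 𝒵_{i+k} for i = 0, …, N−1, and z_N ∈ 𝒵_f. Then the shifted candidate sequences defined by z'_i = z_{i+1} for i = 0, …, N−1, z'_N = (A + B K_f) z_N, v'_i = v_{i+1} for i = 0, …, N−2, and v'_{N−1} = K_f z_N satisfy z'_{i+1} = A z'_i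 + B v'_i for i = 0, …, N−1, v'_i ∈ 𝒱 for i = 0, …, N−1, z'_i ∈ 𝒵_{i+k+1} for i = 0, …, N−1, and z'_N ∈ 𝒵_f. Hence feasibility of the tightened optimal control problem at time k implies feasibility at time k+1 (recursive feasibility). -/
open Matrix

/-- Recursive feasibility of the shifted candidate: if `𝒵_f` is positively
invariant under the terminal law `z ↦ (A + B K_f) z`, `K_f 𝒵_f ⊆ 𝒱`, and
`𝒵_f ⊆ 𝒵_j` for all `j`, then any feasible nominal trajectory at time `k`
(dynamics `z_{i+1} = A z_i + B v_i`, inputs in `𝒱`, states `z_i ∈ 𝒵_{i+k}`,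
terminal state in `𝒵_f`) yields, via the shifted candidate sequences, a
feasible trajectory at time `k + 1`. -/
theorem stmt15 {n m : ℕ} (A : Matrix (Fin n) (Fin n) ℝ) (B : Matrix (Fin n) (Fin m) ℝ)
    (Kf : Matrix (Fin m) (Fin n) ℝ)
    (V : Set (Fin m → ℝ)) (Z : ℕ → Set (Fin n → ℝ)) (Zf : Set (Fin n → ℝ))
    (hinv : (fun z => (A + B * Kf).mulVec z) '' Zf ⊆ Zf)
    (hKf : (fun z => Kf.mulVec z) '' Zf ⊆ V)
    (hZf : ∀ j, Zf ⊆ Z j)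
    (N k : ℕ) (hN : 1 ≤ N)
    (z : ℕ → Fin n → ℝ) (v : ℕ → Fin m → ℝ)
    (hdyn : ∀ i < N, z (i + 1) = A.mulVec (z i) + B.mulVec (v i))
    (hv : ∀ i < N, v i ∈ V)
    (hz : ∀ i < N, z i ∈ Z (i + k))
    (hzN : z N ∈ Zf) :
    let z' : ℕ → Fin n → ℝ :=
      fun i => if i < N then z (i + 1) else (A + B * Kf).mulVec (z N)
    let v' : ℕ → Fin m → ℝ :=
      fun i => if i + 1 < N then v (i + 1) else Kf.mulVec (z N)
    (∀ i < N, z' (i + 1) = A.mulVec (z' i) + B.mulVec (v' i)) ∧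
    (∀ i < N, v' i ∈ V) ∧
    (∀ i < N, z' i ∈ Z (i + k + 1)) ∧
    z' N ∈ Zf := by
  intro z' v'
  refine ⟨?_, ?_, ?_, ?_⟩
  · intro i hi
    by_cases h : i + 1 < N
    · simp only [z', v', if_pos h, if_pos hi]
      exact hdyn (i + 1) h
    · have hi1 : i + 1 = N := by omega
      simp only [z', v', if_neg h, if_pos hi, hi1, lt_irrefl, if_false,
        Matrix.add_mulVec, Matrix.mulVec_mulVec]
  · intro i hi
    by_cases h : i + 1 < N
    · simp only [v', if_pos h]
      exact hv (i + 1) h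
    · simp only [v', if_neg h]
      exact hKf ⟨z N, hzN, rfl⟩
  · intro i hi
    simp only [z', if_pos hi]
    by_cases h : i + 1 < N
    · have := hz (i + 1) h
      simpa [Nat.add_right_comm i 1 k] using this
    · have hi1 : i + 1 = N := by omega
      rw [hi1]
      exact hZf _ hzN
  · simp only [z', if_neg (lt_irrefl N)]
    exact hinv ⟨z N, hzN, rfl⟩
end
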